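/- The sum over non-target indices of the cross-entropy gradients equals 1 - P_θ(y_j), and hence (∑_{i≠j} ∂L_kd/∂z_i)/(∑_{i≠j} ∂L_ce/∂z_i) = (1-α) + α·(P_θ(y_j) - P_φ(y_j))/(P_θ(y_j) - 1), assuming P_θ(y_j) < 1. -/

import Mathlib

/-! Both summed gradients are read off from the complements `1 - P_θ(y_j)`, `1 - P_φ(y_j)`:
on each non-target index the KD gradient is `P_θ(y_i) - α P_φ(y_i)`, so the ratio is
`1 - α (1 - P_φ(y_j)) / (1 - P_θ(y_j))`, which rearranges to the stated form. -/

open Finset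

lemma sum_erase_eq_one_sub {ι : Type*} [Fintype ι] [DecidableEq ι] {p : ι → ℝ}
    (hp : ∑ i, p i = 1) (j : ι) : ∑ i ∈ univ.erase j, p i = 1 - p j := by
  rw [sum_erase_eq_sub (mem_univ j), hp]

lemma sum_interpolate_sub {ι : Type*} (s : Finset ι) (p q : ι → ℝ) (α : ℝ) :
    ∑ i ∈ s, ((1 - α) * p i + α * (p i - q i)) = ∑ i ∈ s, p i - α * ∑ i ∈ s, q i := by
  rw [mul_sum, ← sum_sub_distrib]
  exact sum_congr rfl fun i _ => by ring

lemma one_sub_sub_mul_div_one_sub {a b : ℝ} (ha : a ≠ 1) (α : ℝ) :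
    ((1 - a) - α * (1 - b)) / (1 - a) = (1 - α) + α * (a - b) / (a - 1) := by
  have ha' : a - 1 ≠ 0 := sub_ne_zero.mpr ha
  have ha'' : 1 - a ≠ 0 := sub_ne_zero.mpr ha.symm
  field_simp
  ring

theorem stmt_8_general (C : ℕ) (Pθ Pφ : Fin C → ℝ)
    (hPθ : ∑ i, Pθ i = 1) (hPφ : ∑ i, Pφ i = 1)
    (j : Fin C) (α : ℝ) (hj : Pθ j < 1) :
    ∑ i ∈ Finset.univ.erase j, Pθ i = 1 - Pθ j ∧
      (∑ i ∈ Finset.univ.erase j, ((1 - α) * Pθ i + α * (Pθ i - Pφ i)))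
          / (∑ i ∈ Finset.univ.erase j, Pθ i)
        = (1 - α) + α * (Pθ j - Pφ j) / (Pθ j - 1) := by
  have hce := sum_erase_eq_one_sub hPθ j
  refine ⟨hce, ?_⟩
  rw [sum_interpolate_sub, hce, sum_erase_eq_one_sub hPφ j]
  exact one_sub_sub_mul_div_one_sub hj.ne α

/-- The sum of CE gradients over non-target indices equals `1 - P_θ(y_j)`,
and the ratio of the summed KD gradients to the summed CE gradients equals
`(1-α) + α(P_θ(y_j) - P_φ(y_j))/(P_θ(y_j) - 1)` when `P_θ(y_j) < 1`. -/
theorem stmt_8 (C : ℕ) (Pθ Pφ : Fin C → ℝ)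
    (hPθ : ∑ i, Pθ i = 1) (hPφ : ∑ i, Pφ i = 1)
    (j : Fin C) (α : ℝ) (hα0 : 0 ≤ α) (hα1 : α ≤ 1) (hj : Pθ j < 1) :
    ∑ i ∈ Finset.univ.erase j, Pθ i = 1 - Pθ j ∧
      (∑ i ∈ Finset.univ.erase j, ((1 - α) * Pθ i + α * (Pθ i - Pφ i)))
          / (∑ i ∈ Finset.univ.erase j, Pθ i)
        = (1 - α) + α * (Pθ j - Pφ j) / (Pθ j - 1) :=
  stmt_8_general C Pθ Pφ hPθ hPφ j α hj
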